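/- Consider the two-vertex one-player parity game with vertices u, v, self-loop edges of priority 0 at each vertex, an edge (u, v) of priority 1, and an edge (v, u) of priority 2, with all vertices belonging to Adam. Eve wins the parity game from u, but Adam wins the 0-register game from u; moreover Eve wins the 1-register game from u. Hence this game has register-index exactly 1. -/

import Mathlib

/-!
In `G5` priority `1` can be seen again only after the edge `(v, u)` of priority `2`, so a play
either sees `2` infinitely often or eventually stays at one vertex seeing only `0`; Eve wins
either way.

In the `0`-register game Eve's single register only remembers the last priority, and Adam cycles
`u → v → v → u`, making her read `1` followed by `0`, hence output `1`, infinitely often; no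
output exceeds `1`.

In the `1`-register game Eve stores each `2` in the top register, which then outputs `2` because
no priority exceeds `2`, and every other priority in the bottom register, whose outputs are at
most `1`. If `2` is seen infinitely often, the largest output is `2`; otherwise the play
eventually sees only `0`, which resets the bottom register to `0` and makes it output `0`.
-/

/-- A parity game arena with priorities on edges. `owner v = true` means the
position belongs to Eve; `edge v p w` means there is an edge from `v` to `w`
carrying priority `p`. -/
structure PGame (V : Type) where
  owner : V → Bool
  edge : V → ℕ → V → Prop

/-- The priority `p` occurs infinitely often in the priority sequence `c`. -/
def InfOcc (c : ℕ → ℕ) (p : ℕ) : Prop := ∀ n, ∃ i, n ≤ i ∧ c i = p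

/-- Eve wins a play whose sequence of traversed priorities is `c` iff the
largest priority occurring infinitely often is even. -/
def EveWinsPlay (c : ℕ → ℕ) : Prop :=
  ∃ p, InfOcc c p ∧ Even p ∧ ∀ q, InfOcc c q → q ≤ p

/-- `π` (positions) together with `c` (priorities) forms a play of `G`. -/
def IsPlay {V : Type} (G : PGame V) (π : ℕ → V) (c : ℕ → ℕ) : Prop :=
  ∀ i, G.edge (π i) (c i) (π (i + 1))

/-- A (history-dependent) strategy: given the history of previously visited
positions and the current position, it picks an outgoing edge (priority and
successor). -/
structure Strategy {V : Type} (G : PGame V) where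
  next : List V → V → ℕ × V
  valid : ∀ l v, G.edge v (next l v).1 (next l v).2

def histUpTo {V : Type} (π : ℕ → V) (i : ℕ) : List V := List.ofFn (fun j : Fin i => π j)

/-- The play `(π, c)` agrees with the strategy `σ` of player `b`. -/
def Agrees {V : Type} (G : PGame V) (b : Bool) (σ : Strategy G) (π : ℕ → V) (c : ℕ → ℕ) : Prop :=
  ∀ i, G.owner (π i) = b → (c i, π (i + 1)) = σ.next (histUpTo π i) (π i)

/-- Player `b` (`true` = Eve, `false` = Adam) has a winning strategy from `v`. -/
def WinsFrom {V : Type} (G : PGame V) (b : Bool) (v : V) : Prop :=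
  ∃ σ : Strategy G, ∀ π c, IsPlay G π c → π 0 = v → Agrees G b σ π c →
    (if b = true then EveWinsPlay c else ¬ EveWinsPlay c)

/-- Register update: registers below `i` are reset to `0`, register `i` is set
to `p`, registers above `i` become `max (r j) p`. -/
def newReg {k : ℕ} (r : Fin (k + 1) → ℕ) (i : Fin (k + 1)) (p : ℕ) : Fin (k + 1) → ℕ :=
  fun j => if j < i then 0 else if j = i then p else max (r j) p

/-- Output produced when Eve chooses register `i` upon seeing priority `p`. -/
def outE {k : ℕ} (r : Fin (k + 1) → ℕ) (i : Fin (k + 1)) (p : ℕ) : ℕ :=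
  if Even (max (r i) p) then 2 * i.1 else 2 * i.1 + 1

/-- Output produced when Adam chooses register `i` (Adam-controlled variant). -/
def outA {k : ℕ} (r : Fin (k + 1) → ℕ) (i : Fin (k + 1)) (p : ℕ) : ℕ :=
  if Even (r i) then 2 * i.1 + 2 else 2 * i.1 + 1

/-- Positions of the `k`-register game: a position of `G`, the register
contents, and `none` (a move of `G` is next) or `some p` (the register
controller must choose a register, `p` being the priority just seen). -/
abbrev RegPos (V : Type) (k : ℕ) : Type := V × (Fin (k + 1) → ℕ) × Option ℕ

/-- The `k`-register game on `G` in which Eve controls the registers. -/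
def regGameE {V : Type} (G : PGame V) (k : ℕ) : PGame (RegPos V k) where
  owner := fun s => match s.2.2 with
    | none => G.owner s.1
    | some _ => true
  edge := fun s o s' => match s, s' with
    | (v, r, none), (w, r', some p) => G.edge v p w ∧ r' = r ∧ o = 0
    | (v, r, some p), (w, r', none) => w = v ∧ ∃ i, r' = newReg r i p ∧ o = outE r i p
    | _, _ => False

/-- The `k`-register game on `G` in which Adam controls the registers. -/
def regGameA {V : Type} (G : PGame V) (k : ℕ) : PGame (RegPos V k) where
  owner := fun s => match s.2.2 with
    | none => G.owner s.1
    | some _ => false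
  edge := fun s o s' => match s, s' with
    | (v, r, none), (w, r', some p) => G.edge v p w ∧ r' = r ∧ o = 0
    | (v, r, some p), (w, r', none) => w = v ∧ ∃ i, r' = newReg r i p ∧ o = outA r i p
    | _, _ => False

/-- The two-vertex one-player arena of Figure 2: vertices `u = 0` and `v = 1`,
self-loops of priority `0`, an edge `(u, v)` of priority `1` and an edge
`(v, u)` of priority `2`; all positions belong to Adam. -/
def G5 : PGame (Fin 2) where
  owner := fun _ => false
  edge := fun a p b =>
    (a = 0 ∧ b = 0 ∧ p = 0) ∨ (a = 1 ∧ b = 1 ∧ p = 0) ∨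
    (a = 0 ∧ b = 1 ∧ p = 1) ∨ (a = 1 ∧ b = 0 ∧ p = 2)

open Filter

section WinningCondition

variable {c : ℕ → ℕ} {p : ℕ}

lemma infOcc_iff_frequently : InfOcc c p ↔ ∃ᶠ n in atTop, c n = p :=
  frequently_atTop.symm

lemma not_infOcc_iff_eventually : ¬ InfOcc c p ↔ ∀ᶠ n in atTop, c n ≠ p := by
  rw [infOcc_iff_frequently, not_frequently]

lemma EveWinsPlay.of_infOcc_of_le (h : InfOcc c p) (hp : Even p) (hle : ∀ n, c n ≤ p) :
    EveWinsPlay c :=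
  ⟨p, h, hp, fun q hq => by obtain ⟨n, -, rfl⟩ := hq 0; exact hle n⟩

lemma EveWinsPlay.of_eventually_eq (h : ∀ᶠ n in atTop, c n = p) (hp : Even p) :
    EveWinsPlay c := by
  refine ⟨p, infOcc_iff_frequently.2 h.frequently, hp, fun q hq => ?_⟩
  obtain ⟨n, hnq, hnp⟩ := ((infOcc_iff_frequently.1 hq).and_eventually h).exists
  omega

lemma not_eveWinsPlay_of_infOcc_of_le (h : InfOcc c p) (hp : Odd p) (hle : ∀ n, c n ≤ p) :
    ¬ EveWinsPlay c := by
  rintro ⟨q, hq, hq_even, hmax⟩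
  obtain ⟨n, -, rfl⟩ := hq 0
  rw [le_antisymm (hle n) (hmax p h)] at hq_even
  exact Nat.not_even_iff_odd.2 hp hq_even

end WinningCondition

section RegisterGame

variable {V : Type} {G : PGame V} {k : ℕ}

lemma regGameE_edge_none {v : V} {r : Fin (k + 1) → ℕ} {o : ℕ} {s : RegPos V k} :
    (regGameE G k).edge (v, r, none) o s ↔
      ∃ p, G.edge v p s.1 ∧ s.2 = (r, some p) ∧ o = 0 := by
  rcases s with ⟨w, r', _ | p⟩ <;> simp [regGameE, and_comm]

lemma regGameE_edge_some {v : V} {r : Fin (k + 1) → ℕ} {p o : ℕ} {s : RegPos V k} :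
    (regGameE G k).edge (v, r, some p) o s ↔
      ∃ i, s = (v, newReg r i p, none) ∧ o = outE r i p := by
  rcases s with ⟨w, r', _ | q⟩ <;> simp [regGameE, eq_comm, and_assoc]

lemma outE_le (r : Fin (k + 1) → ℕ) (i : Fin (k + 1)) (p : ℕ) : outE r i p ≤ 2 * k + 1 := by
  unfold outE; split_ifs <;> omega

lemma newReg_le {r : Fin (k + 1) → ℕ} {B p : ℕ} (hr : ∀ j, r j ≤ B) (hp : p ≤ B)
    (i j : Fin (k + 1)) : newReg r i p j ≤ B := by
  unfold newReg; split_ifs <;> simp [hr j, hp]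

lemma regGameE_edge_le {s s' : RegPos V k} {o : ℕ} (h : (regGameE G k).edge s o s') :
    o ≤ 2 * k + 1 := by
  rcases s with ⟨v, r, _ | p⟩
  · obtain ⟨-, -, -, rfl⟩ := regGameE_edge_none.1 h; omega
  · obtain ⟨i, -, rfl⟩ := regGameE_edge_some.1 h; exact outE_le r i p

lemma IsPlay.regGameE_two_steps {π : ℕ → RegPos V k} {c : ℕ → ℕ}
    (hπ : IsPlay (regGameE G k) π c) {n : ℕ} {v : V} {r : Fin (k + 1) → ℕ}
    (h : π n = (v, r, none)) :
    ∃ w p i, G.edge v p w ∧ π (n + 1) = (w, r, some p) ∧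
      π (n + 2) = (w, newReg r i p, none) := by
  obtain ⟨p, hp, hs, -⟩ := regGameE_edge_none.1 (h ▸ hπ n)
  have hsucc : π (n + 1) = ((π (n + 1)).1, r, some p) := Prod.ext rfl hs
  obtain ⟨i, hi, -⟩ := regGameE_edge_some.1 (hsucc ▸ hπ (n + 1))
  exact ⟨_, p, i, hp, hsucc, hi⟩

lemma IsPlay.exists_basePlay {π : ℕ → RegPos V k} {c : ℕ → ℕ}
    (hπ : IsPlay (regGameE G k) π c) (h0 : (π 0).2.2 = none) :
    ∃ (v : ℕ → V) (r : ℕ → Fin (k + 1) → ℕ) (p : ℕ → ℕ), IsPlay G v p ∧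
      ∀ i, π (2 * i) = (v i, r i, none) ∧ π (2 * i + 1) = (v (i + 1), r i, some (p i)) := by
  have shape (i : ℕ) : ∃ v r, π (2 * i) = (v, r, none) := by
    induction i with
    | zero => exact ⟨_, _, Prod.ext rfl (Prod.ext rfl h0)⟩
    | succ i ih =>
      obtain ⟨v, r, hi⟩ := ih
      obtain ⟨w, p, j, -, -, hj⟩ := hπ.regGameE_two_steps hi
      exact ⟨w, _, hj⟩
  choose v r hvr using shape
  have step (i : ℕ) : ∃ p, G.edge (v i) p (v (i + 1)) ∧
      π (2 * i + 1) = (v (i + 1), r i, some p) := by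
    obtain ⟨w, p, j, hp, hodd, heven⟩ := hπ.regGameE_two_steps (hvr i)
    obtain rfl : w = v (i + 1) := congrArg Prod.fst (heven.symm.trans (hvr (i + 1)))
    exact ⟨p, hp, hodd⟩
  choose p hp hodd using step
  exact ⟨v, r, p, hp, fun i => ⟨hvr i, hodd i⟩⟩

end RegisterGame

namespace G5

section ParityGame

variable {π : ℕ → Fin 2} {c : ℕ → ℕ}

lemma edge_le_two {a b : Fin 2} {p : ℕ} (h : G5.edge a p b) : p ≤ 2 := by
  rcases h with ⟨-, -, rfl⟩ | ⟨-, -, rfl⟩ | ⟨-, -, rfl⟩ | ⟨-, -, rfl⟩ <;> norm_num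

lemma eq_one_of_edge_one {b : Fin 2} {p : ℕ} (h : G5.edge 1 p b) (hp : p ≠ 2) :
    b = 1 ∧ p = 0 := by
  simp [G5] at h
  omega

lemma eq_zero_of_edge_zero_zero {p : ℕ} (h : G5.edge 0 p 0) : p = 0 := by
  simpa [G5] using h

lemma eventually_eq_zero (hπ : IsPlay G5 π c) (h2 : ∀ᶠ n in atTop, c n ≠ 2) :
    ∀ᶠ n in atTop, c n = 0 := by
  obtain ⟨N, hN⟩ := eventually_atTop.1 h2
  by_cases hv : ∃ m ≥ N, π m = 1
  · obtain ⟨m, hmN, hm⟩ := hv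
    have edge_at (n : ℕ) (hn : π n = 1) (hnN : N ≤ n) : π (n + 1) = 1 ∧ c n = 0 :=
      eq_one_of_edge_one (hn ▸ hπ n) (hN n hnN)
    have stay : ∀ n ≥ m, π n = 1 := fun n hn => by
      induction n, hn using Nat.le_induction with
      | base => exact hm
      | succ n hmn ih => exact (edge_at n ih (by omega)).1
    exact eventually_atTop.2 ⟨m, fun n hn => (edge_at n (stay n hn) (by omega)).2⟩
  · push Not at hv
    have hu : ∀ n ≥ N, π n = 0 := fun n hn => by have := hv n hn; omega
    refine eventually_atTop.2 ⟨N, fun n hn => eq_zero_of_edge_zero_zero ?_⟩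
    simpa only [hu n hn, hu (n + 1) (by omega)] using hπ n

lemma eveWinsPlay (hπ : IsPlay G5 π c) : EveWinsPlay c := by
  by_cases h2 : InfOcc c 2
  · exact .of_infOcc_of_le h2 even_two fun n => edge_le_two (hπ n)
  · exact .of_eventually_eq (eventually_eq_zero hπ (not_infOcc_iff_eventually.1 h2)) .zero

def loopStrategy : Strategy G5 where
  next _ v := (0, v)
  valid _ v := by fin_cases v <;> simp [G5]

lemma eve_winsFrom : WinsFrom G5 true 0 :=
  ⟨loopStrategy, fun _ _ hπ _ _ => eveWinsPlay hπ⟩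

end ParityGame

section ZeroRegister

def adamMove : RegPos (Fin 2) 0 → ℕ × RegPos (Fin 2) 0
  | (v, r, none) =>
      if v = 0 then (0, (1, r, some 1))
      else if r 0 = 1 then (0, (1, r, some 0)) else (0, (0, r, some 2))
  | (v, r, some p) => (outE r 0 p, (v, newReg r 0 p, none))

def adamStrategy : Strategy (regGameE G5 0) where
  next _ := adamMove
  valid _ s := by
    rcases s with ⟨v, r, _ | p⟩
    · fin_cases v <;> simp only [adamMove] <;> split_ifs <;> simp_all [regGameE, G5]
    · exact ⟨rfl, 0, rfl, rfl⟩

variable {π : ℕ → RegPos (Fin 2) 0} {c : ℕ → ℕ}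

lemma adamStrategy_step (hπ : IsPlay (regGameE G5 0) π c)
    (hagree : Agrees (regGameE G5 0) false adamStrategy π c) (n : ℕ) :
    (c n, π (n + 1)) = adamMove (π n) := by
  rcases h : π n with ⟨v, r, _ | p⟩
  · exact h ▸ hagree n (by rw [h]; rfl)
  · obtain ⟨i, hi, ho⟩ := regGameE_edge_some.1 (h ▸ hπ n)
    obtain rfl := Fin.fin_one_eq_zero i
    rw [hi, ho]
    rfl

def adamNext (s : RegPos (Fin 2) 0) : RegPos (Fin 2) 0 := (adamMove s).2

lemma adamNext_iterate_two : adamNext^[2] (0, fun _ => 0, none) = (1, fun _ => 1, none) := by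
  decide

lemma adamNext_iterate_six : adamNext^[6] (1, fun _ => 1, none) = (1, fun _ => 1, none) := by
  decide

lemma adamMove_adamNext_fst : (adamMove (adamNext (1, fun _ => 1, none))).1 = 1 := by
  decide

lemma adam_winsFrom_zero_register : WinsFrom (regGameE G5 0) false (0, fun _ => 0, none) := by
  refine ⟨adamStrategy, fun π c hπ h0 hagree => ?_⟩
  have hnext (n : ℕ) : π (n + 1) = adamNext (π n) :=
    congrArg Prod.snd (adamStrategy_step hπ hagree n)
  have hout (n : ℕ) : c n = (adamMove (π n)).1 :=
    congrArg Prod.fst (adamStrategy_step hπ hagree n)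
  have hiterate (n : ℕ) : π n = adamNext^[n] (π 0) := by
    induction n with
    | zero => rfl
    | succ n ih => rw [Function.iterate_succ_apply', ← ih, hnext]
  have hcycle (m : ℕ) : π (6 * m + 2) = (1, fun _ => 1, none) := by
    rw [hiterate, Function.iterate_add_apply, h0, adamNext_iterate_two, Function.iterate_mul,
      Function.iterate_fixed adamNext_iterate_six]
  have hone : InfOcc c 1 := fun n =>
    ⟨6 * n + 3, by omega, by rw [hout, hnext, hcycle, adamMove_adamNext_fst]⟩
  exact not_eveWinsPlay_of_infOcc_of_le hone odd_one fun n => regGameE_edge_le (hπ n)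

end ZeroRegister

section OneRegister

def eveRegister (p : ℕ) : Fin 2 := if p = 2 then 1 else 0

def eveStrategy : Strategy (regGameE G5 1) where
  next _ s := match s with
    | (v, r, none) => (0, (v, r, some 0))
    | (v, r, some p) => (outE r (eveRegister p) p, (v, newReg r (eveRegister p) p, none))
  valid _ s := by
    rcases s with ⟨v, r, _ | p⟩
    · fin_cases v <;> simp [regGameE, G5]
    · exact ⟨rfl, _, rfl, rfl⟩

lemma eveStrategy_step {π : ℕ → RegPos (Fin 2) 1} {c : ℕ → ℕ}
    (hagree : Agrees (regGameE G5 1) true eveStrategy π c) {n : ℕ} {v : Fin 2}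
    {r : Fin 2 → ℕ} {p : ℕ} (h : π n = (v, r, some p)) :
    c n = outE r (eveRegister p) p ∧ π (n + 1) = (v, newReg r (eveRegister p) p, none) := by
  have := hagree n (by rw [h]; rfl)
  rw [h] at this
  exact Prod.mk.inj this

lemma outE_eveRegister_two {r : Fin 2 → ℕ} (hr : r 1 ≤ 2) : outE r (eveRegister 2) 2 = 2 := by
  simp [outE, eveRegister, max_eq_right hr]

lemma outE_eveRegister_le {r : Fin 2 → ℕ} (hr : r 1 ≤ 2) (p : ℕ) :
    outE r (eveRegister p) p ≤ 2 := by
  by_cases hp : p = 2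
  · subst hp; rw [outE_eveRegister_two hr]
  · simp only [outE, eveRegister, if_neg hp]; split_ifs <;> simp

lemma outE_eveRegister_zero {r : Fin 2 → ℕ} (hr : r 0 = 0) : outE r (eveRegister 0) 0 = 0 := by
  simp [outE, eveRegister, hr]

lemma eveStrategy_exists_basePlay {π : ℕ → RegPos (Fin 2) 1} {c : ℕ → ℕ}
    (hπ : IsPlay (regGameE G5 1) π c) (h0 : π 0 = (0, fun _ => 0, none))
    (hagree : Agrees (regGameE G5 1) true eveStrategy π c) :
    ∃ (v : ℕ → Fin 2) (r : ℕ → Fin 2 → ℕ) (p : ℕ → ℕ),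
      IsPlay G5 v p ∧ r 0 = (fun _ => 0) ∧
      ∀ i, c (2 * i) = 0 ∧ c (2 * i + 1) = outE (r i) (eveRegister (p i)) (p i) ∧
        r (i + 1) = newReg (r i) (eveRegister (p i)) (p i) := by
  obtain ⟨v, r, p, hbase, hπvr⟩ := hπ.exists_basePlay (by rw [h0])
  refine ⟨v, r, p, hbase, congrArg (fun s => s.2.1) ((hπvr 0).1.symm.trans h0), fun i => ?_⟩
  obtain ⟨-, -, -, hc_even⟩ := regGameE_edge_none.1 ((hπvr i).1 ▸ hπ (2 * i))
  obtain ⟨hc_odd, hnext⟩ := eveStrategy_step hagree (hπvr i).2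
  have h := (hπvr (i + 1)).1
  rw [show 2 * (i + 1) = 2 * i + 1 + 1 by ring, hnext] at h
  exact ⟨hc_even, hc_odd, congrArg (fun s => s.2.1) h.symm⟩

lemma eve_winsFrom_one_register : WinsFrom (regGameE G5 1) true (0, fun _ => 0, none) := by
  refine ⟨eveStrategy, fun π c hπ h0 hagree => ?_⟩
  obtain ⟨v, r, p, hbase, hr0, hstep⟩ := eveStrategy_exists_basePlay hπ h0 hagree
  have hreg (i : ℕ) : ∀ j, r i j ≤ 2 := by
    induction i with
    | zero => simp [hr0]
    | succ i ih => rw [(hstep i).2.2]; exact newReg_le ih (edge_le_two (hbase i)) _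
  have hle (n : ℕ) : c n ≤ 2 := by
    obtain ⟨i, rfl | rfl⟩ := Nat.even_or_odd' n
    · simp [(hstep i).1]
    · rw [(hstep i).2.1]; exact outE_eveRegister_le (hreg i 1) _
  by_cases h2 : InfOcc p 2
  · refine .of_infOcc_of_le (fun n => ?_) even_two hle
    obtain ⟨i, hi, hpi⟩ := h2 n
    exact ⟨2 * i + 1, by omega, by rw [(hstep i).2.1, hpi, outE_eveRegister_two (hreg i 1)]⟩
  · obtain ⟨N, hN⟩ :=
      eventually_atTop.1 (eventually_eq_zero hbase (not_infOcc_iff_eventually.1 h2))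
    refine .of_eventually_eq (eventually_atTop.2 ⟨2 * N + 2, fun n hn => ?_⟩) .zero
    obtain ⟨i, rfl | rfl⟩ := Nat.even_or_odd' n
    · exact (hstep i).1
    · obtain ⟨j, rfl⟩ : ∃ j, i = j + 1 := ⟨i - 1, by omega⟩
      have hbottom : r (j + 1) 0 = 0 := by
        rw [(hstep j).2.2, hN j (by omega)]
        simp [newReg, eveRegister]
      rw [(hstep (j + 1)).2.1, hN (j + 1) (by omega), outE_eveRegister_zero hbottom]

end OneRegister

end G5

/-- Eve wins the parity game `G5` from `u`, Adam wins the
`0`-register game from `u`, and Eve wins the `1`-register game from `u`.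
Hence `G5` has register-index exactly `1`. -/
theorem stmt5 :
    WinsFrom G5 true 0 ∧
    WinsFrom (regGameE G5 0) false (0, fun _ => 0, none) ∧
    WinsFrom (regGameE G5 1) true (0, fun _ => 0, none) :=
  ⟨G5.eve_winsFrom, G5.adam_winsFrom_zero_register, G5.eve_winsFrom_one_register⟩
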